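/- arXiv:2301.11740 — 2 statements merged into one kernel-verified Lean document; each statement's English description precedes it below -/
import Mathlib

section
/- Let 𝔸 = (A, ≤, →, Σ) be an implicative algebra with |A| < κ for a strongly inaccessible cardinal κ, and let W, ∈_W, =_W and the interpretation ‖·‖ be as defined below. Then W validates the Empty-set axiom: ‖∃x ∀y(y ∈ x → ⊥)‖ ∈ Σ. -/
universe u

/-- An implicative algebra `𝔸 = (A, ≤, →, Σ)`:  a complete lattice `(A, ≤)` together with an
implication `imp` which is antitone in its first argument, monotone in its second argument and
turns infima in the second argument into infima, and a separator `Sig ⊆ A` which is upward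
closed, closed under modus ponens and contains the combinators `K` and `S`. -/
structure ImplicativeAlgebra (A : Type u) [CompleteLattice A] where
  imp : A → A → A
  imp_antitone : ∀ ⦃a a' b : A⦄, a ≤ a' → imp a' b ≤ imp a b
  imp_monotone : ∀ ⦃a b b' : A⦄, b ≤ b' → imp a b ≤ imp a b'
  imp_sInf : ∀ (a : A) (S : Set A), imp a (sInf S) = ⨅ b ∈ S, imp a b
  Sig : Set A
  Sig_upward : ∀ ⦃a b : A⦄, a ∈ Sig → a ≤ b → b ∈ Sig
  Sig_mp : ∀ ⦃a b : A⦄, imp a b ∈ Sig → a ∈ Sig → b ∈ Sig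
  Sig_K : (⨅ a : A, ⨅ b : A, imp a (imp b a)) ∈ Sig
  Sig_S : (⨅ a : A, ⨅ b : A, ⨅ c : A,
      imp (imp a (imp b c)) (imp (imp a b) (imp a c))) ∈ Sig

namespace ImplicativeAlgebra

variable {A : Type u} [CompleteLattice A]

/-- `a × b := ⨅ x, ((a → (b → x)) → x)`. -/
def times (IA : ImplicativeAlgebra A) (a b : A) : A :=
  ⨅ x : A, IA.imp (IA.imp a (IA.imp b x)) x

/-- `a + b := ⨅ x, ((a → x) → ((b → x) → x))`. -/
def plus (IA : ImplicativeAlgebra A) (a b : A) : A :=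
  ⨅ x : A, IA.imp (IA.imp a x) (IA.imp (IA.imp b x) x)

/-- `∃⃗_{i} f i := ⨅ x, ((⨅ i, (f i → x)) → x)`.  (`∀⃗` is just `⨅`.) -/
def aex (IA : ImplicativeAlgebra A) {ι : Sort*} (f : ι → A) : A :=
  ⨅ x : A, IA.imp (⨅ i, IA.imp (f i) x) x

/-- `φ ⊢_{Σ[I]} ψ` iff `⨅ i, (φ i → ψ i) ∈ Σ`. -/
def SigLe (IA : ImplicativeAlgebra A) {ι : Sort*} (f g : ι → A) : Prop :=
  (⨅ i, IA.imp (f i) (g i)) ∈ IA.Sig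

/-- `φ ≡_{Σ[I]} ψ` iff `φ ⊢_{Σ[I]} ψ` and `ψ ⊢_{Σ[I]} φ`. -/
def SigEquiv (IA : ImplicativeAlgebra A) {ι : Sort*} (f g : ι → A) : Prop :=
  IA.SigLe f g ∧ IA.SigLe g f

end ImplicativeAlgebra

/-- Pre-elements of the cumulative hierarchy of partial functions valued in `A`:
an element is an `A`-labelled family of previously constructed elements, i.e. a partial
function (presented by a family indexed by its domain) from earlier elements to `A`. -/
inductive PreW (A : Type u) : Type (u + 1)
  | mk (ι : Type u) (fam : ι → PreW A) (val : ι → A)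

namespace PreW

variable {A : Type u}

/-- The (index type of the) domain of a partial function. -/
def dom : PreW A → Type u
  | ⟨ι, _, _⟩ => ι

/-- The family of elements of the domain. -/
def fam : (w : PreW A) → w.dom → PreW A
  | ⟨_, f, _⟩ => f

/-- The values in `A` of the partial function. -/
def val : (w : PreW A) → w.dom → A
  | ⟨_, _, v⟩ => v

/-- `w` is hereditarily of size `< κ`:  this carves out exactly the elements of the stage
`W_κ` of the hierarchy (for `κ` inaccessible). -/
def HSmall (κ : Cardinal.{u}) : PreW A → Prop
  | ⟨ι, f, _⟩ => Cardinal.mk ι < κ ∧ ∀ i, HSmall κ (f i)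

theorem HSmall.fam {κ : Cardinal.{u}} :
    ∀ {w : PreW A}, w.HSmall κ → ∀ i : w.dom, (w.fam i).HSmall κ
  | ⟨_, _, _⟩, h, i => h.2 i

/-- The rank of an element of the hierarchy. -/
noncomputable def rank : PreW A → Ordinal.{u}
  | ⟨_, f, _⟩ => ⨆ i, Order.succ (rank (f i))

theorem rank_lt_mk {ι : Type u} (f : ι → PreW A) (v : ι → A) (i : ι) :
    (f i).rank < (PreW.mk ι f v).rank := by
  have h : Order.succ (f i).rank ≤ ⨆ j, Order.succ (f j).rank := Ordinal.le_iSup _ i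
  have : (f i).rank < ⨆ j, Order.succ (f j).rank :=
    lt_of_lt_of_le (Order.lt_succ _) h
  simpa [rank] using this

end PreW

namespace ImplicativeAlgebra

variable {A : Type u} [CompleteLattice A]

/-- `α =_W β`, defined by recursion on rank:
`α =_W β := (α ⊆_W β) × (β ⊆_W α)` where
`α ⊆_W β := ∀⃗_{t ∈ dom α} (α t → (fam α t ∈_W β))` and
`γ ∈_W β := ∃⃗_{s ∈ dom β} (β s × (fam β s =_W γ))`. -/
noncomputable def eqW (IA : ImplicativeAlgebra A) : PreW A → PreW A → A
  | ⟨ι₁, f₁, v₁⟩, ⟨ι₂, f₂, v₂⟩ =>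
    IA.times
      (⨅ t : ι₁, IA.imp (v₁ t)
        (IA.aex fun s : ι₂ => IA.times (v₂ s) (IA.eqW (f₂ s) (f₁ t))))
      (⨅ t : ι₂, IA.imp (v₂ t)
        (IA.aex fun s : ι₁ => IA.times (v₁ s) (IA.eqW (f₁ s) (f₂ t))))
termination_by α β => max α.rank β.rank
decreasing_by
  · exact max_lt (lt_of_lt_of_le (PreW.rank_lt_mk f₂ v₂ s) (le_max_right _ _))
      (lt_of_lt_of_le (PreW.rank_lt_mk f₁ v₁ t) (le_max_left _ _))
  · exact max_lt (lt_of_lt_of_le (PreW.rank_lt_mk f₁ v₁ s) (le_max_left _ _))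
      (lt_of_lt_of_le (PreW.rank_lt_mk f₂ v₂ t) (le_max_right _ _))

/-- `α ∈_W β := ∃⃗_{s ∈ dom β} (β s × (fam β s =_W α))`. -/
noncomputable def memW (IA : ImplicativeAlgebra A) (α β : PreW A) : A :=
  IA.aex fun s : β.dom => IA.times (β.val s) (IA.eqW (β.fam s) α)

/-- `α ⊆_W β := ∀⃗_{t ∈ dom α} (α t → (fam α t ∈_W β))`. -/
noncomputable def subW (IA : ImplicativeAlgebra A) (α β : PreW A) : A :=
  ⨅ t : α.dom, IA.imp (α.val t) (IA.memW (α.fam t) β)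

end ImplicativeAlgebra

/-- The stage `W = W_κ` of the hierarchy: all hereditarily `< κ`-sized elements. -/
def WSet (A : Type u) (κ : Cardinal.{u}) : Type (u + 1) :=
  {w : PreW A // w.HSmall κ}

/-- An element of the domain of `w ∈ W`, as an element of `W`. -/
def WSet.fam {A : Type u} {κ : Cardinal.{u}} (w : WSet A κ) (i : w.1.dom) : WSet A κ :=
  ⟨w.1.fam i, w.2.fam i⟩

/-- Formulas (in context of length `n`) of the first-order language of set theory, with
(de Bruijn-style) variables `Fin n`, binary predicates `∈` and `=`, connectives `⊥`, `∧`, `∨`,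
`→` and quantifiers `∃`, `∀` (binding the last variable of the enlarged context). -/
inductive SetFormula : ℕ → Type
  | bot {n : ℕ} : SetFormula n
  | mem {n : ℕ} (i j : Fin n) : SetFormula n
  | eq {n : ℕ} (i j : Fin n) : SetFormula n
  | and {n : ℕ} (φ ψ : SetFormula n) : SetFormula n
  | or {n : ℕ} (φ ψ : SetFormula n) : SetFormula n
  | imp {n : ℕ} (φ ψ : SetFormula n) : SetFormula n
  | ex {n : ℕ} (φ : SetFormula (n + 1)) : SetFormula n
  | all {n : ℕ} (φ : SetFormula (n + 1)) : SetFormula n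

namespace SetFormula

/-- Renaming of variables (since the only terms of the language of set theory are variables,
substitution is a special case). -/
def rename : {n m : ℕ} → (Fin n → Fin m) → SetFormula n → SetFormula m
  | _, _, _, .bot => .bot
  | _, _, f, .mem i j => .mem (f i) (f j)
  | _, _, f, .eq i j => .eq (f i) (f j)
  | _, _, f, .and φ ψ => .and (φ.rename f) (ψ.rename f)
  | _, _, f, .or φ ψ => .or (φ.rename f) (ψ.rename f)
  | _, _, f, .imp φ ψ => .imp (φ.rename f) (ψ.rename f)
  | _, _, f, .ex φ => .ex (φ.rename (Fin.snoc (Fin.castSucc ∘ f) (Fin.last _)))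
  | _, _, f, .all φ => .all (φ.rename (Fin.snoc (Fin.castSucc ∘ f) (Fin.last _)))

/-- Universal closure `∀x₁ … ∀xₙ φ` of a formula in context of length `n`. -/
def allClose : {n : ℕ} → SetFormula n → SetFormula 0
  | 0, φ => φ
  | _ + 1, φ => allClose (.all φ)

end SetFormula

namespace ImplicativeAlgebra

variable {A : Type u} [CompleteLattice A]

/-- The interpretation `‖φ[x₁,…,xₙ]‖ : Wⁿ → A` of a formula in context, by recursion on the
structure of `φ`:  atomic formulas are interpreted by `∈_W` and `=_W`, `∧` by `×`, `∨` by `+`,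
`→` by `→`, `∃` by `∃⃗` over `W` and `∀` by `∀⃗` (i.e. `⨅`) over `W`. -/
noncomputable def interp (IA : ImplicativeAlgebra A) (κ : Cardinal.{u}) :
    {n : ℕ} → SetFormula n → (Fin n → WSet A κ) → A
  | _, .bot, _ => ⊥
  | _, .mem i j, v => IA.memW (v i).1 (v j).1
  | _, .eq i j, v => IA.eqW (v i).1 (v j).1
  | _, .and φ ψ, v => IA.times (IA.interp κ φ v) (IA.interp κ ψ v)
  | _, .or φ ψ, v => IA.plus (IA.interp κ φ v) (IA.interp κ ψ v)
  | _, .imp φ ψ, v => IA.imp (IA.interp κ φ v) (IA.interp κ ψ v)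
  | _, .ex φ, v => IA.aex fun β : WSet A κ => IA.interp κ φ (Fin.snoc v β)
  | _, .all φ, v => ⨅ β : WSet A κ, IA.interp κ φ (Fin.snoc v β)

end ImplicativeAlgebra

/-! The empty name `∅` (with empty domain) is the witness. Since `dom ∅` is empty, `γ ∈_W ∅` is an
existential over an empty family and lies below `⊤ → ⊥`; so every `γ ∈_W ∅ → ⊥` lies above
`(⊤ → ⊥) → ⊥`, which is realized by the self-application combinator `δ = S I I` because
`⊤ → ⊥ ≤ (⊤ → ⊥) → ⊥`. -/

namespace ImplicativeAlgebra

variable {A : Type u} [CompleteLattice A] (IA : ImplicativeAlgebra A)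

def app (a b : A) : A := sInf {x | a ≤ IA.imp b x}

lemma le_imp_app (a b : A) : a ≤ IA.imp b (IA.app a b) := by
  rw [app, IA.imp_sInf]
  exact le_iInf fun _ => le_iInf fun hx => hx

lemma app_le {a b c : A} (h : a ≤ IA.imp b c) : IA.app a b ≤ c := sInf_le h

lemma app_mono {a a' b b' : A} (ha : a ≤ a') (hb : b ≤ b') : IA.app a b ≤ IA.app a' b' :=
  IA.app_le (ha.trans ((IA.le_imp_app a' b').trans (IA.imp_antitone hb)))

lemma app_mem {a b : A} (ha : a ∈ IA.Sig) (hb : b ∈ IA.Sig) : IA.app a b ∈ IA.Sig :=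
  IA.Sig_mp (IA.Sig_upward ha (IA.le_imp_app a b)) hb

def combK : A := ⨅ a : A, ⨅ b : A, IA.imp a (IA.imp b a)

def combS : A := ⨅ a : A, ⨅ b : A, ⨅ c : A,
  IA.imp (IA.imp a (IA.imp b c)) (IA.imp (IA.imp a b) (IA.imp a c))

def combI : A := IA.app (IA.app IA.combS IA.combK) IA.combK

lemma combI_mem : IA.combI ∈ IA.Sig :=
  IA.app_mem (IA.app_mem IA.Sig_S IA.Sig_K) IA.Sig_K

lemma app_combK_le (a b : A) : IA.app (IA.app IA.combK a) b ≤ a :=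
  IA.app_le (IA.app_le ((iInf_le _ a).trans (iInf_le _ b)))

lemma app_combS_le (a b c : A) :
    IA.app (IA.app (IA.app IA.combS a) b) c ≤ IA.app (IA.app a c) (IA.app b c) := by
  set X := IA.app (IA.app a c) (IA.app b c)
  have ha : a ≤ IA.imp c (IA.imp (IA.app b c) X) :=
    (IA.le_imp_app a c).trans (IA.imp_monotone (IA.le_imp_app _ _))
  have hS : IA.combS ≤ IA.imp a (IA.imp (IA.imp c (IA.app b c)) (IA.imp c X)) :=
    (((iInf_le _ c).trans (iInf_le _ (IA.app b c))).trans (iInf_le _ X)).trans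
      (IA.imp_antitone ha)
  have hSa : IA.app IA.combS a ≤ IA.imp b (IA.imp c X) :=
    (IA.app_le hS).trans (IA.imp_antitone (IA.le_imp_app b c))
  exact IA.app_le (IA.app_le hSa)

lemma app_combI_le (a : A) : IA.app IA.combI a ≤ a :=
  (IA.app_combS_le _ _ a).trans (IA.app_combK_le a _)

lemma aex_mem {ι : Sort*} (f : ι → A) (i : ι) (h : f i ∈ IA.Sig) : IA.aex f ∈ IA.Sig := by
  -- the realizer `λk. k c` of `∃⃗ f`, written `S I (K c)`, from a realizer `c` of `f i`
  set c := f i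
  have hmem : IA.app (IA.app IA.combS IA.combI) (IA.app IA.combK c) ∈ IA.Sig :=
    IA.app_mem (IA.app_mem IA.Sig_S IA.combI_mem) (IA.app_mem IA.Sig_K h)
  refine IA.Sig_upward hmem (le_iInf fun x => ?_)
  set k := ⨅ j, IA.imp (f j) x
  calc _ ≤ IA.imp k (IA.app (IA.app (IA.app IA.combS IA.combI) (IA.app IA.combK c)) k) :=
        IA.le_imp_app _ _
    _ ≤ IA.imp k x := IA.imp_monotone <| calc
        _ ≤ IA.app (IA.app IA.combI k) (IA.app (IA.app IA.combK c) k) := IA.app_combS_le _ _ _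
        _ ≤ IA.app k c := IA.app_mono (IA.app_combI_le k) (IA.app_combK_le c k)
        _ ≤ x := IA.app_le (iInf_le _ i)

lemma imp_mem_of_le_imp {a b : A} (h : a ≤ IA.imp a b) : IA.imp a b ∈ IA.Sig := by
  have hmem : IA.app (IA.app IA.combS IA.combI) IA.combI ∈ IA.Sig :=
    IA.app_mem (IA.app_mem IA.Sig_S IA.combI_mem) IA.combI_mem
  refine IA.Sig_upward hmem ((IA.le_imp_app _ a).trans (IA.imp_monotone ?_))
  calc _ ≤ IA.app (IA.app IA.combI a) (IA.app IA.combI a) := IA.app_combS_le _ _ _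
    _ ≤ IA.app a a := IA.app_mono (IA.app_combI_le a) (IA.app_combI_le a)
    _ ≤ b := IA.app_le h

lemma aex_le_imp_top_bot {ι : Sort*} [IsEmpty ι] (f : ι → A) : IA.aex f ≤ IA.imp ⊤ ⊥ :=
  (iInf_le _ ⊥).trans (IA.imp_antitone (le_iInf isEmptyElim))

end ImplicativeAlgebra

namespace PreW

variable {A : Type u}

def empty : PreW A := ⟨PEmpty, PEmpty.elim, PEmpty.elim⟩

instance : IsEmpty (empty : PreW A).dom := inferInstanceAs (IsEmpty PEmpty)

lemma hSmall_empty {κ : Cardinal.{u}} (hκ : 0 < κ) : (empty : PreW A).HSmall κ :=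
  ⟨by simpa using hκ, isEmptyElim⟩

end PreW

theorem stmt11_general {A : Type u} [CompleteLattice A] (IA : ImplicativeAlgebra A)
    (κ : Cardinal.{u}) (hκ : κ.IsInaccessible) :
    IA.interp κ
      (SetFormula.ex (SetFormula.all ((SetFormula.mem 1 0).imp SetFormula.bot)))
      (fun i => i.elim0) ∈ IA.Sig := by
  show IA.aex (fun β : WSet A κ => ⨅ γ : WSet A κ, IA.imp (IA.memW γ.1 β.1) ⊥) ∈ IA.Sig
  refine IA.aex_mem _ ⟨PreW.empty, PreW.hSmall_empty (Cardinal.aleph0_pos.trans hκ.1)⟩ ?_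
  have hnotnot : IA.imp (IA.imp ⊤ ⊥) ⊥ ∈ IA.Sig := IA.imp_mem_of_le_imp (IA.imp_antitone le_top)
  exact IA.Sig_upward hnotnot
    (le_iInf fun γ => IA.imp_antitone (IA.aex_le_imp_top_bot _))

theorem stmt11 {A : Type u} [CompleteLattice A] (IA : ImplicativeAlgebra A)
    (κ : Cardinal.{u}) (hκ : κ.IsInaccessible) (hA : Cardinal.mk A < κ) :
    IA.interp κ
      (SetFormula.ex (SetFormula.all ((SetFormula.mem 1 0).imp SetFormula.bot)))
      (fun i => i.elim0) ∈ IA.Sig :=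
  stmt11_general IA κ hκ
end

section
/- Let 𝔸 = (A, ≤, →, Σ) be an implicative algebra with |A| < κ for a strongly inaccessible cardinal κ, and let W, ∈_W, =_W and the interpretation ‖·‖ be as defined below. Then W validates the Pairing axiom: ‖∀x ∀y ∃z (x ∈ z ∧ y ∈ z)‖ ∈ Σ. -/
universe u

/-! Every closed combination of `K` and `S` lies in `Σ`, and bracket abstraction makes such
combinations behave like λ-terms with respect to application `a · b := ⨅ {c | a ≤ b → c}`.
Pairing is then realized uniformly: `=_W` is reflexive with a realizer obtained from Turing's
fixed-point combinator by `∈`-induction, so the two-element name `{α ↦ ⊤, β ↦ ⊤}`, which lies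
in `W` because `κ` is uncountable, contains both `α` and `β` with a realizer independent of
`α` and `β`. -/

inductive SKTerm : Type
  | K : SKTerm
  | S : SKTerm
  | var (n : ℕ) : SKTerm
  | app (t u : SKTerm) : SKTerm

namespace SKTerm

def abstract (n : ℕ) : SKTerm → SKTerm
  | var m => if n = m then app (app S K) K else app K (var m)
  | app t u => app (app S (abstract n t)) (abstract n u)
  | K => app K K
  | S => app K S

/-- `λ a b f. f a b` -/
def pair : SKTerm :=
  abstract 0 (abstract 1 (abstract 2 (app (app (var 2) (var 0)) (var 1))))

/-- `λ a h. h a` -/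
def pack : SKTerm :=
  abstract 0 (abstract 1 (app (var 1) (var 0)))

/-- Turing's fixed-point combinator `(λ x f. f (x x f)) (λ x f. f (x x f))`. -/
def turing : SKTerm :=
  let d := abstract 0 (abstract 1 (app (var 1) (app (app (var 0) (var 0)) (var 1))))
  app d d

/-- `λ r u. pack (pair u r)` -/
def step : SKTerm :=
  abstract 0 (abstract 1 (app pack (app (app pair (var 1)) (var 0))))

/-- `λ r. pair (step r) (step r)` -/
def reflStep : SKTerm :=
  abstract 0 (app (app pair (app step (var 0))) (app step (var 0)))

def refl : SKTerm := app turing reflStep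

def pairing : SKTerm :=
  let m := app pack (app (app pair K) refl)
  app pack (app (app pair m) m)

end SKTerm

namespace PreW

variable {A : Type u} [Top A]

def pair (α β : PreW A) : PreW A :=
  ⟨ULift Bool, fun s => if s.down then α else β, fun _ => ⊤⟩

theorem HSmall.pair {κ : Cardinal.{u}} (hκ : Cardinal.aleph0 < κ) {α β : PreW A}
    (hα : α.HSmall κ) (hβ : β.HSmall κ) : (α.pair β).HSmall κ :=
  ⟨(Cardinal.lt_aleph0_of_finite _).trans hκ, fun | ⟨true⟩ => hα | ⟨false⟩ => hβ⟩

end PreW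

namespace ImplicativeAlgebra

variable {A : Type u} [CompleteLattice A] (IA : ImplicativeAlgebra A)

def ap (a b : A) : A := sInf {c | a ≤ IA.imp b c}

local infixl:75 " ⬝ " => ap IA

theorem ap_le_iff {a b c : A} : a ⬝ b ≤ c ↔ a ≤ IA.imp b c := by
  refine ⟨fun h => le_trans ?_ (IA.imp_monotone h), fun h => sInf_le h⟩
  rw [ap, imp_sInf]
  exact le_iInf₂ fun _ hc => hc

theorem le_imp_ap (a b : A) : a ≤ IA.imp b (a ⬝ b) :=
  IA.ap_le_iff.1 le_rfl

theorem ap_le_of_le_imp {a b b' c : A} (ha : a ≤ IA.imp b' c) (hb : b ≤ b') : a ⬝ b ≤ c :=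
  IA.ap_le_iff.2 (ha.trans (IA.imp_antitone hb))

theorem ap_le_ap {a a' b b' : A} (ha : a ≤ a') (hb : b ≤ b') : a ⬝ b ≤ a' ⬝ b' :=
  IA.ap_le_of_le_imp (ha.trans (IA.le_imp_ap a' b')) hb

theorem ap_mem {a b : A} (ha : a ∈ IA.Sig) (hb : b ∈ IA.Sig) : a ⬝ b ∈ IA.Sig :=
  IA.Sig_mp (IA.Sig_upward ha (IA.le_imp_ap a b)) hb

def K : A := ⨅ a : A, ⨅ b : A, IA.imp a (IA.imp b a)

def S : A := ⨅ a : A, ⨅ b : A, ⨅ c : A,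
  IA.imp (IA.imp a (IA.imp b c)) (IA.imp (IA.imp a b) (IA.imp a c))

theorem K_ap_ap (a b : A) : IA.K ⬝ a ⬝ b ≤ a :=
  IA.ap_le_of_le_imp (IA.ap_le_of_le_imp ((iInf_le _ a).trans (iInf_le _ b)) le_rfl) le_rfl

theorem S_ap_ap_ap (a b c : A) : IA.S ⬝ a ⬝ b ⬝ c ≤ a ⬝ c ⬝ (b ⬝ c) := by
  have hS : IA.S ≤ IA.imp (IA.imp c (IA.imp (b ⬝ c) (a ⬝ c ⬝ (b ⬝ c))))
      (IA.imp (IA.imp c (b ⬝ c)) (IA.imp c (a ⬝ c ⬝ (b ⬝ c)))) :=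
    iInf_le_of_le c <| iInf_le_of_le (b ⬝ c) <| iInf_le _ _
  have ha : a ≤ IA.imp c (IA.imp (b ⬝ c) (a ⬝ c ⬝ (b ⬝ c))) :=
    (IA.le_imp_ap a c).trans (IA.imp_monotone (IA.le_imp_ap _ _))
  exact IA.ap_le_of_le_imp (IA.ap_le_of_le_imp (IA.ap_le_of_le_imp hS ha) (IA.le_imp_ap b c))
    le_rfl

def apps (a : A) (l : List A) : A := l.foldl (ap IA) a

theorem apps_le_apps {a a' : A} (h : a ≤ a') : ∀ l : List A, IA.apps a l ≤ IA.apps a' l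
  | [] => h
  | _ :: l => apps_le_apps (IA.ap_le_ap h le_rfl) l

def eval (ρ : ℕ → A) : SKTerm → A
  | .K => IA.K
  | .S => IA.S
  | .var n => ρ n
  | .app t u => eval ρ t ⬝ eval ρ u

theorem eval_mem {ρ : ℕ → A} (hρ : ∀ n, ρ n ∈ IA.Sig) : ∀ t : SKTerm, IA.eval ρ t ∈ IA.Sig
  | .K => IA.Sig_K
  | .S => IA.Sig_S
  | .var n => hρ n
  | .app t u => IA.ap_mem (eval_mem hρ t) (eval_mem hρ u)

theorem eval_abstract_ap (ρ : ℕ → A) (n : ℕ) (a : A) :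
    ∀ t : SKTerm, IA.eval ρ (t.abstract n) ⬝ a ≤ IA.eval (Function.update ρ n a) t
  | .var m => by
    by_cases h : n = m
    · subst h
      simpa [SKTerm.abstract, eval] using
        (IA.S_ap_ap_ap IA.K IA.K a).trans (IA.K_ap_ap a (IA.K ⬝ a))
    · simpa [SKTerm.abstract, eval, h, Function.update_of_ne (Ne.symm h)] using IA.K_ap_ap (ρ m) a
  | .K => IA.K_ap_ap IA.K a
  | .S => IA.K_ap_ap IA.S a
  | .app t u => (IA.S_ap_ap_ap _ _ a).trans
      (IA.ap_le_ap (eval_abstract_ap ρ n a t) (eval_abstract_ap ρ n a u))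

theorem eval_abstract_apps (ρ : ℕ → A) (n : ℕ) (a : A) (t : SKTerm) (l : List A) :
    IA.apps (IA.eval ρ (t.abstract n) ⬝ a) l ≤ IA.apps (IA.eval (Function.update ρ n a) t) l :=
  IA.apps_le_apps (IA.eval_abstract_ap ρ n a t) l

variable (ρ : ℕ → A)

theorem eval_pair_ap (a b f : A) : IA.eval ρ .pair ⬝ a ⬝ b ⬝ f ≤ f ⬝ a ⬝ b := by
  refine (IA.eval_abstract_apps _ _ _ _ [b, f]).trans ?_
  refine (IA.eval_abstract_apps _ _ _ _ [f]).trans ?_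
  refine (IA.eval_abstract_apps _ _ _ _ []).trans ?_
  simp [eval, apps]

theorem eval_pack_ap (a h : A) : IA.eval ρ .pack ⬝ a ⬝ h ≤ h ⬝ a := by
  refine (IA.eval_abstract_apps _ _ _ _ [h]).trans ?_
  refine (IA.eval_abstract_apps _ _ _ _ []).trans ?_
  simp [eval, apps]

theorem eval_turing_ap (f : A) : IA.eval ρ .turing ⬝ f ≤ f ⬝ (IA.eval ρ .turing ⬝ f) := by
  refine (IA.eval_abstract_apps _ _ _ _ [f]).trans ?_
  refine (IA.eval_abstract_apps _ _ _ _ []).trans ?_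
  simp [eval, apps, SKTerm.turing]

theorem eval_pair_le_times {a b x y : A} (ha : a ≤ x) (hb : b ≤ y) :
    IA.eval ρ .pair ⬝ a ⬝ b ≤ IA.times x y :=
  le_iInf fun _ => IA.ap_le_iff.1 <|
    (IA.eval_pair_ap ρ a b _).trans (IA.ap_le_of_le_imp (IA.ap_le_of_le_imp le_rfl ha) hb)

theorem eval_pack_le_aex {ι : Sort*} {f : ι → A} {a : A} (i : ι) (ha : a ≤ f i) :
    IA.eval ρ .pack ⬝ a ≤ IA.aex f :=
  le_iInf fun _ => IA.ap_le_iff.1 <|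
    (IA.eval_pack_ap ρ a _).trans (IA.ap_le_of_le_imp (iInf_le _ i) ha)

theorem eqW_eq_times_subW : ∀ α β : PreW A,
    IA.eqW α β = IA.times (IA.subW α β) (IA.subW β α)
  | ⟨_, _, _⟩, ⟨_, _, _⟩ => by rw [eqW]; rfl

theorem pack_pair_le_memW {α β : PreW A} {s : β.dom} (hs : β.fam s = α) {a r : A}
    (ha : a ≤ β.val s) (hr : r ≤ IA.eqW α α) :
    IA.eval ρ .pack ⬝ (IA.eval ρ .pair ⬝ a ⬝ r) ≤ IA.memW α β :=
  IA.eval_pack_le_aex ρ s (IA.eval_pair_le_times ρ ha (hs ▸ hr))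

theorem eval_step_le_subW {α : PreW A} {r : A} (hr : ∀ t, r ≤ IA.eqW (α.fam t) (α.fam t)) :
    IA.eval ρ .step ⬝ r ≤ IA.subW α α := by
  refine le_iInf fun t => IA.ap_le_iff.1 ?_
  refine (IA.eval_abstract_apps _ _ _ _ [α.val t]).trans ?_
  refine (IA.eval_abstract_apps _ _ _ _ []).trans ?_
  simpa [eval, apps] using IA.pack_pair_le_memW _ rfl le_rfl (hr t)

theorem eval_reflStep_le_eqW {α : PreW A} {r : A}
    (hr : ∀ t, r ≤ IA.eqW (α.fam t) (α.fam t)) : IA.eval ρ .reflStep ⬝ r ≤ IA.eqW α α := by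
  refine (IA.eval_abstract_apps _ _ _ _ []).trans ?_
  have hstep := IA.eval_step_le_subW (Function.update ρ 0 r) hr
  simpa [eval, apps, eqW_eq_times_subW] using IA.eval_pair_le_times _ hstep hstep

theorem eval_refl_le_eqW : ∀ α : PreW A, IA.eval ρ .refl ≤ IA.eqW α α
  | ⟨_, _, _⟩ => (IA.eval_turing_ap ρ _).trans <|
      IA.eval_reflStep_le_eqW ρ fun _ => eval_refl_le_eqW _

theorem interp_pairing (κ : Cardinal.{u}) :
    IA.interp κ
      (SetFormula.all (SetFormula.all (SetFormula.ex
        ((SetFormula.mem 0 2).and (SetFormula.mem 1 2)))))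
      (fun i => i.elim0) =
    ⨅ α : WSet A κ, ⨅ β : WSet A κ,
      IA.aex fun γ : WSet A κ => IA.times (IA.memW α.1 γ.1) (IA.memW β.1 γ.1) := by
  simp [interp, Fin.snoc]

end ImplicativeAlgebra

theorem stmt13_general {A : Type u} [CompleteLattice A] (IA : ImplicativeAlgebra A)
    (κ : Cardinal.{u}) (hκ : κ.IsInaccessible) :
    IA.interp κ
      (SetFormula.all (SetFormula.all (SetFormula.ex
        ((SetFormula.mem 0 2).and (SetFormula.mem 1 2)))))
      (fun i => i.elim0) ∈ IA.Sig := by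
  rw [IA.interp_pairing]
  let ρ : ℕ → A := fun _ => IA.K
  refine IA.Sig_upward (IA.eval_mem (ρ := ρ) (fun _ => IA.Sig_K) .pairing)
    (le_iInf₂ fun α β => ?_)
  let γ : WSet A κ := ⟨α.1.pair β.1, .pair hκ.aleph0_lt α.2 β.2⟩
  have hrefl := IA.eval_refl_le_eqW ρ
  exact IA.eval_pack_le_aex ρ γ <| IA.eval_pair_le_times ρ
    (IA.pack_pair_le_memW ρ (β := γ.1) (s := ULift.up true) rfl le_top (hrefl _))
    (IA.pack_pair_le_memW ρ (β := γ.1) (s := ULift.up false) rfl le_top (hrefl _))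

theorem stmt13 {A : Type u} [CompleteLattice A] (IA : ImplicativeAlgebra A)
    (κ : Cardinal.{u}) (hκ : κ.IsInaccessible) (hA : Cardinal.mk A < κ) :
    IA.interp κ
      (SetFormula.all (SetFormula.all (SetFormula.ex
        ((SetFormula.mem 0 2).and (SetFormula.mem 1 2)))))
      (fun i => i.elim0) ∈ IA.Sig :=
  stmt13_general IA κ hκ
end
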